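/- Fix channels h_1, …, h_K ∈ ℂ^N, noise powers σ_k² > 0, SINR thresholds τ_k > 0, sensing steering vectors a_1, …, a_M ∈ ℂ^N with gain thresholds Γ_m, power budget P_max > 0, ρ ∈ (0,1], and P_c > 0. Suppose PSD matrices V_0, V_1, …, V_K and reals t ≥ 0, u ≥ 0 satisfy all constraints of the reformulated problem (7): u ≥ (1/ρ)Σ_k Tr(V_k) + (1/ρ)Tr(V_0) + P_c; t·u ≤ Σ_k log₂(1 + γ'_k) with γ'_k = h_kᴴ V_k h_k / (Σ_{i=0, i≠k}^{K} h_kᴴ V_i h_k + σ_k²); h_kᴴ V_k h_k ≥ τ_k (Σ_{i=0, i≠k}^{K} h_kᴴ V_i h_k + σ_k²) for all k; Σ_k Tr(V_k) + Tr(V_0) ≤ P_max; a_mᴴ (Σ_k V_k + V_0) a_m ≥ Γ_m for all m; and each V_k (k = 1, …, K) has the form V_k = v_k v_kᴴ for some v_k ∈ ℂ^N. Then (v_1, …, v_K, V_0) is feasible for the original problem (6) — i.e. γ_k = |h_kᴴ v_k|² / (Σ_{i≠k} |h_kᴴ v_i|² + h_kᴴ V_0 h_k + σ_k²) ≥ τ_k,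 Σ_k ||v_k||² + Tr(V_0) ≤ P_max, and a_mᴴ (Σ_k v_k v_kᴴ + V_0) a_m ≥ Γ_m — and its objective value satisfies η'_EE = Σ_k log₂(1 + γ_k) / ((1/ρ)Σ_k ||v_k||² + (1/ρ)Tr(V_0) + P_c) ≥ t. -/

import Mathlib

open Matrix Finset
open scoped ComplexOrder

/-- The real quadratic form of a complex matrix `V` at vector `x`: `xᴴ V x` (real part). -/
noncomputable def quadForm {N : ℕ} (V : Matrix (Fin N) (Fin N) ℂ) (x : Fin N → ℂ) : ℝ :=
  (star x ⬝ᵥ V *ᵥ x).re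

/-!
Under the rank-one substitution `V_k = v_k v_kᴴ` one has `h_kᴴ V_i h_k = |h_kᴴ v_i|²` and
`Tr V_k = ‖v_k‖²`, so the SINRs `γ'_k` of (7) are literally the SINRs `γ_k` of (6) and the
power terms agree. The SINR and power constraints therefore transfer verbatim, and the
energy efficiency bound follows from `t · D ≤ t · u ≤ Σ log₂(1 + γ_k)`, where `D ≤ u` is the
(positive) power consumption.
-/

lemma quadForm_vecMulVec_star {N : ℕ} (v x : Fin N → ℂ) :
    quadForm (vecMulVec v (star v)) x = ‖star x ⬝ᵥ v‖ ^ 2 := by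
  have hfactor : star x ⬝ᵥ vecMulVec v (star v) *ᵥ x = (star x ⬝ᵥ v) * star (star x ⬝ᵥ v) := by
    rw [vecMulVec_mulVec, star_dotProduct v x]
    simp [dotProduct_smul, mul_comm]
  rw [quadForm, hfactor, Complex.star_def, Complex.mul_conj']
  norm_cast

lemma trace_vecMulVec_star_re {n : Type*} [Fintype n] (v : n → ℂ) :
    (vecMulVec v (star v)).trace.re = ∑ i, ‖v i‖ ^ 2 := by
  simp only [trace_vecMulVec, dotProduct, Pi.star_apply, Complex.star_def, Complex.mul_conj',
    Complex.re_sum]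
  norm_cast

lemma quadForm_nonneg {N : ℕ} {V : Matrix (Fin N) (Fin N) ℂ} (hV : V.PosSemidef)
    (x : Fin N → ℂ) : 0 ≤ quadForm V x :=
  (Complex.nonneg_iff.mp (hV.dotProduct_mulVec_nonneg x)).1

lemma Matrix.PosSemidef.trace_re_nonneg {n : Type*} [Fintype n] {V : Matrix n n ℂ}
    (hV : V.PosSemidef) : 0 ≤ V.trace.re :=
  (Complex.nonneg_iff.mp hV.trace_nonneg).1

lemma Fin.sum_univ_erase_succ {G : Type*} [AddCommGroup G] {n : ℕ} (f : Fin (n + 1) → G)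
    (k : Fin n) :
    ∑ i ∈ univ.erase k.succ, f i = f 0 + ∑ i ∈ univ.erase k, f i.succ := by
  rw [sum_erase_eq_sub (mem_univ _), sum_erase_eq_sub (mem_univ _), Fin.sum_univ_succ]
  abel

lemma sum_erase_succ_quadForm_of_rankOne {N K : ℕ} {V : Fin (K + 1) → Matrix (Fin N) (Fin N) ℂ}
    {v : Fin K → Fin N → ℂ} (hrank1 : ∀ k, V k.succ = vecMulVec (v k) (star (v k)))
    (k : Fin K) (x : Fin N → ℂ) :
    ∑ i ∈ univ.erase k.succ, quadForm (V i) x =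
      ∑ i ∈ univ.erase k, ‖star x ⬝ᵥ v i‖ ^ 2 + quadForm (V 0) x := by
  simp only [Fin.sum_univ_erase_succ (fun i => quadForm (V i) x), hrank1,
    quadForm_vecMulVec_star]
  ring

theorem reformulated_feasible_implies_original_feasible_general {N K M : ℕ}
    (h : Fin K → Fin N → ℂ) (σ2 τ : Fin K → ℝ)
    (hσ : ∀ k, 0 < σ2 k)
    (a : Fin M → Fin N → ℂ) (Γ : Fin M → ℝ)
    (Pmax ρ Pc : ℝ) (hρ0 : 0 < ρ) (hPc : 0 < Pc)
    (V : Fin (K + 1) → Matrix (Fin N) (Fin N) ℂ)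
    (hVpsd : ∀ i, (V i).PosSemidef)
    (t u : ℝ) (ht0 : 0 ≤ t)
    -- the SINRs of the reformulated problem
    (γ' : Fin K → ℝ)
    (hγ' : ∀ k, γ' k = quadForm (V k.succ) (h k) /
      ((∑ i ∈ Finset.univ.erase k.succ, quadForm (V i) (h k)) + σ2 k))
    -- feasibility for the reformulated problem (7)
    (hu : u ≥ (1 / ρ) * (∑ k : Fin K, (Matrix.trace (V k.succ)).re) +
      (1 / ρ) * (Matrix.trace (V 0)).re + Pc)
    (htu : t * u ≤ ∑ k, Real.logb 2 (1 + γ' k))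
    (hSINR' : ∀ k : Fin K, quadForm (V k.succ) (h k) ≥
      τ k * ((∑ i ∈ Finset.univ.erase k.succ, quadForm (V i) (h k)) + σ2 k))
    (hpow : (∑ k : Fin K, (Matrix.trace (V k.succ)).re) + (Matrix.trace (V 0)).re ≤ Pmax)
    (hsens : ∀ m, quadForm ((∑ k : Fin K, V k.succ) + V 0) (a m) ≥ Γ m)
    -- the rank-one structure
    (v : Fin K → Fin N → ℂ)
    (hrank1 : ∀ k : Fin K, V k.succ = vecMulVec (v k) (star (v k)))
    -- the communication SINRs of the original problem
    (γ : Fin K → ℝ)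
    (hγ : ∀ k, γ k = ‖star (h k) ⬝ᵥ v k‖ ^ 2 /
      ((∑ i ∈ Finset.univ.erase k, ‖star (h k) ⬝ᵥ v i‖ ^ 2) + quadForm (V 0) (h k) + σ2 k)) :
    -- feasibility of (v, V 0) for the original problem (6), and η'_EE ≥ t
    (∀ k, γ k ≥ τ k) ∧
    ((∑ k, ∑ i, ‖v k i‖ ^ 2) + (Matrix.trace (V 0)).re ≤ Pmax) ∧
    (∀ m, quadForm ((∑ k, vecMulVec (v k) (star (v k))) + V 0) (a m) ≥ Γ m) ∧
    (∑ k, Real.logb 2 (1 + γ k)) /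
      ((1 / ρ) * (∑ k, ∑ i, ‖v k i‖ ^ 2) + (1 / ρ) * (Matrix.trace (V 0)).re + Pc) ≥ t := by
  have hγ_eq : γ = γ' := funext fun k => by
    rw [hγ, hγ', sum_erase_succ_quadForm_of_rankOne hrank1, hrank1, quadForm_vecMulVec_star]
  have htrace : ∑ k : Fin K, (V k.succ).trace.re = ∑ k, ∑ i, ‖v k i‖ ^ 2 := by
    simp only [hrank1, trace_vecMulVec_star_re]
  have hsum : ∑ k : Fin K, V k.succ = ∑ k, vecMulVec (v k) (star (v k)) := by
    simp only [hrank1]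
  subst hγ_eq
  rw [htrace] at hu hpow
  rw [hsum] at hsens
  refine ⟨fun k => ?_, hpow, hsens, ?_⟩
  · have hden : 0 < ∑ i ∈ univ.erase k.succ, quadForm (V i) (h k) + σ2 k :=
      add_pos_of_nonneg_of_pos (sum_nonneg fun i _ => quadForm_nonneg (hVpsd i) (h k)) (hσ k)
    rw [hγ', ge_iff_le, le_div_iff₀ hden]
    exact hSINR' k
  · have hpower : 0 < (1 / ρ) * (∑ k, ∑ i, ‖v k i‖ ^ 2) + (1 / ρ) * (V 0).trace.re + Pc := by
      have := (hVpsd 0).trace_re_nonneg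
      positivity
    rw [ge_iff_le, le_div_iff₀ hpower]
    exact (mul_le_mul_of_nonneg_left hu ht0).trans htu

/-- converse direction of Proposition 1: any feasible point of
the reformulated problem (7) whose communication covariances are rank-one outer
products `V_k = v_k v_kᴴ` yields a feasible point of the original problem (6)
with EE objective `η'_EE ≥ t`. -/
theorem reformulated_feasible_implies_original_feasible {N K M : ℕ}
    (h : Fin K → Fin N → ℂ) (σ2 τ : Fin K → ℝ)
    (hσ : ∀ k, 0 < σ2 k) (hτ : ∀ k, 0 < τ k)
    (a : Fin M → Fin N → ℂ) (Γ : Fin M → ℝ)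
    (Pmax ρ Pc : ℝ) (hPmax : 0 < Pmax) (hρ0 : 0 < ρ) (hρ1 : ρ ≤ 1) (hPc : 0 < Pc)
    (V : Fin (K + 1) → Matrix (Fin N) (Fin N) ℂ)
    (hVpsd : ∀ i, (V i).PosSemidef)
    (t u : ℝ) (ht0 : 0 ≤ t) (hu0 : 0 ≤ u)
    -- the SINRs of the reformulated problem
    (γ' : Fin K → ℝ)
    (hγ' : ∀ k, γ' k = quadForm (V k.succ) (h k) /
      ((∑ i ∈ Finset.univ.erase k.succ, quadForm (V i) (h k)) + σ2 k))
    -- feasibility for the reformulated problem (7)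
    (hu : u ≥ (1 / ρ) * (∑ k : Fin K, (Matrix.trace (V k.succ)).re) +
      (1 / ρ) * (Matrix.trace (V 0)).re + Pc)
    (htu : t * u ≤ ∑ k, Real.logb 2 (1 + γ' k))
    (hSINR' : ∀ k : Fin K, quadForm (V k.succ) (h k) ≥
      τ k * ((∑ i ∈ Finset.univ.erase k.succ, quadForm (V i) (h k)) + σ2 k))
    (hpow : (∑ k : Fin K, (Matrix.trace (V k.succ)).re) + (Matrix.trace (V 0)).re ≤ Pmax)
    (hsens : ∀ m, quadForm ((∑ k : Fin K, V k.succ) + V 0) (a m) ≥ Γ m)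
    -- the rank-one structure
    (v : Fin K → Fin N → ℂ)
    (hrank1 : ∀ k : Fin K, V k.succ = vecMulVec (v k) (star (v k)))
    -- the communication SINRs of the original problem
    (γ : Fin K → ℝ)
    (hγ : ∀ k, γ k = ‖star (h k) ⬝ᵥ v k‖ ^ 2 /
      ((∑ i ∈ Finset.univ.erase k, ‖star (h k) ⬝ᵥ v i‖ ^ 2) + quadForm (V 0) (h k) + σ2 k)) :
    -- feasibility of (v, V 0) for the original problem (6), and η'_EE ≥ t
    (∀ k, γ k ≥ τ k) ∧
    ((∑ k, ∑ i, ‖v k i‖ ^ 2) + (Matrix.trace (V 0)).re ≤ Pmax) ∧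
    (∀ m, quadForm ((∑ k, vecMulVec (v k) (star (v k))) + V 0) (a m) ≥ Γ m) ∧
    (∑ k, Real.logb 2 (1 + γ k)) /
      ((1 / ρ) * (∑ k, ∑ i, ‖v k i‖ ^ 2) + (1 / ρ) * (Matrix.trace (V 0)).re + Pc) ≥ t :=
  reformulated_feasible_implies_original_feasible_general h σ2 τ hσ a Γ Pmax ρ Pc hρ0 hPc V hVpsd t
    u ht0 γ' hγ' hu htu hSINR' hpow hsens v hrank1 γ hγ
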